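/- Let ≿ be a reflexive transitive relation on a set X, let K ⊆ X, let D be a maximal ≿-domain relative to K, and suppose x ∈ D satisfies x ≿ z for all z ∈ D. Then x is ≿-maximal in K. -/

import Mathlib

/-!
If `y ∈ K` satisfies `y ≿ x` and `x` is a best element of `D`, then by transitivity `y` is
comparable with every element of `D`, so `≿` is still complete on `insert y D`. Maximality of `D`
forces `y ∈ D`, and then `x ≿ y` because `x` is best in `D`.
-/

def CompleteOn {X : Type*} (R : X → X → Prop) (A : Set X) : Prop :=
  ∀ x ∈ A, ∀ y ∈ A, R x y ∨ R y x

theorem CompleteOn.insert {X : Type*} {R : X → X → Prop} {A : Set X} {y : X}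
    (hrefl : ∀ a, R a a) (hA : CompleteOn R A) (hy : ∀ z ∈ A, R y z ∨ R z y) :
    CompleteOn R (insert y A) := by
  rintro a (rfl | ha) b (rfl | hb)
  · exact Or.inl (hrefl _)
  · exact hy b hb
  · exact (hy a ha).symm
  · exact hA a ha b hb

theorem mem_of_forall_comparable_of_maximal {X : Type*} {R : X → X → Prop} {K D : Set X}
    (hrefl : ∀ a, R a a) (hDK : D ⊆ K) (hcomp : CompleteOn R D)
    (hmax : ∀ D' : Set X, D ⊆ D' → D' ⊆ K → CompleteOn R D' → D' = D)
    {y : X} (hyK : y ∈ K) (hy : ∀ z ∈ D, R y z ∨ R z y) : y ∈ D := by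
  rw [← hmax (insert y D) (Set.subset_insert y D) (Set.insert_subset hyK hDK)
    (hcomp.insert hrefl hy)]
  exact Set.mem_insert y D

theorem stmt_10_general {X : Type*} (R : X → X → Prop)
    (hrefl : Reflexive R) (htrans : Transitive R)
    (K D : Set X) (hDK : D ⊆ K)
    (hcomp : ∀ x ∈ D, ∀ y ∈ D, R x y ∨ R y x)
    (hmax : ∀ D' : Set X, D ⊆ D' → D' ⊆ K → (∀ x ∈ D', ∀ y ∈ D', R x y ∨ R y x) → D' = D)
    (x : X) (hbest : ∀ z ∈ D, R x z) :
    ∀ y ∈ K, R y x → R x y := by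
  intro y hyK hyx
  have hyD : y ∈ D := mem_of_forall_comparable_of_maximal hrefl hDK hcomp hmax hyK
    fun z hz => Or.inl (htrans hyx (hbest z hz))
  exact hbest y hyD

/-- A best element of a maximal ≿-domain relative to K is ≿-maximal in K. -/
theorem stmt_10 {X : Type*} (R : X → X → Prop)
    (hrefl : Reflexive R) (htrans : Transitive R)
    (K D : Set X) (hDK : D ⊆ K)
    (hcomp : ∀ x ∈ D, ∀ y ∈ D, R x y ∨ R y x)
    (hmax : ∀ D' : Set X, D ⊆ D' → D' ⊆ K → (∀ x ∈ D', ∀ y ∈ D', R x y ∨ R y x) → D' = D)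
    (x : X) (hx : x ∈ D) (hbest : ∀ z ∈ D, R x z) :
    ∀ y ∈ K, R y x → R x y :=
  stmt_10_general R hrefl htrans K D hDK hcomp hmax x hbest
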